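/- Let n be a positive integer and K a field of characteristic zero containing a primitive n-th root of unity ζ. Let a, F ∈ K be such that the polynomial p(X) = X^(2n) − 2·a·X^n + F^n is irreducible in K[X]. Then L := K[X]/(p) is a field, the extension L/K is Galois of degree 2n, and its Galois group is isomorphic to the dihedral group D_n of order 2n; moreover, writing x for the image of X in L, there exist σ, τ ∈ Gal(L/K) generating Gal(L/K) with σ(x) = ζ·x, x·τ(x) = F, σ^n = τ² = (στ)² = 1. -/

import Mathlib

open Polynomial

/-!
Let `x` be the class of `X` in `L = K[X]/(p)`. Dividing `p(x) = 0` by `x ^ n` shows that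
`x ^ n` and `(F / x) ^ n` have sum `2a` and product `F ^ n`, so over `L` the polynomial factors as
`(X ^ n - x ^ n) (X ^ n - (F / x) ^ n)`, with roots `ζ ^ i x` and `ζ ^ i F / x`. Hence `L` is a
splitting field of the separable polynomial `p`, so `L / K` is Galois of degree `2n`, and a
`K`-automorphism is determined by the root it sends `x` to. The automorphisms `σ : x ↦ ζ x`
and `τ : x ↦ F / x` satisfy the dihedral relations and every automorphism is `σ ^ k` or
`τ σ ^ k`; so the induced homomorphism `D_n → Gal(L/K)` is onto, hence bijective as both
groups have order `2n`.
-/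

section Group

variable {G : Type*} [Group G] {σ τ : G}

theorem pow_val_add_of_pow_eq_one {n : ℕ} [NeZero n] (hσ : σ ^ n = 1) (i j : ZMod n) :
    σ ^ (i + j).val = σ ^ i.val * σ ^ j.val := by
  rw [ZMod.val_add, ← pow_eq_pow_mod _ hσ, pow_add]

theorem pow_val_sub_of_pow_eq_one {n : ℕ} [NeZero n] (hσ : σ ^ n = 1) (i j : ZMod n) :
    σ ^ (j - i).val = (σ ^ i.val)⁻¹ * σ ^ j.val := by
  rw [eq_inv_mul_iff_mul_eq, ← pow_val_add_of_pow_eq_one hσ, add_sub_cancel]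

theorem pow_mul_eq_mul_inv_pow (hτ : τ ^ 2 = 1) (hστ : (σ * τ) ^ 2 = 1) (k : ℕ) :
    σ ^ k * τ = τ * (σ ^ k)⁻¹ := by
  have hτ_inv : τ⁻¹ = τ := inv_eq_of_mul_eq_one_left (by rw [← sq, hτ])
  have hστ_inv : σ * τ = (σ * τ)⁻¹ := eq_inv_of_mul_eq_one_left (by rw [← sq, hστ])
  have h : SemiconjBy τ σ⁻¹ σ := by
    rw [SemiconjBy, hστ_inv, mul_inv_rev, hτ_inv]
  rw [← inv_pow]
  exact (h.pow_right k).eq.symm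

theorem Subgroup.closure_pair_eq_top_of_forall_eq_pow_or_mul_pow
    (hG : ∀ g : G, ∃ k : ℕ, g = σ ^ k ∨ g = τ * σ ^ k) : closure {σ, τ} = ⊤ := by
  refine eq_top_iff.2 fun g _ => ?_
  have hσ : σ ∈ closure {σ, τ} := subset_closure (by simp)
  have hτ : τ ∈ closure {σ, τ} := subset_closure (by simp)
  obtain ⟨k, rfl | rfl⟩ := hG g
  exacts [pow_mem hσ k, mul_mem hτ (pow_mem hσ k)]

end Group

namespace DihedralGroup

variable {n : ℕ} [NeZero n] {G : Type*} [Group G] {σ τ : G}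

def lift (hσ : σ ^ n = 1) (hτ : τ ^ 2 = 1) (hστ : (σ * τ) ^ 2 = 1) :
    DihedralGroup n →* G where
  toFun
    | r i => σ ^ i.val
    | sr i => τ * σ ^ i.val
  map_one' := show σ ^ (0 : ZMod n).val = 1 by simp
  map_mul' := by
    have hττ : τ * τ = 1 := by rw [← sq, hτ]
    rintro (i | i) (j | j)
    · simp only [r_mul_r, pow_val_add_of_pow_eq_one hσ]
    · simp only [r_mul_sr, pow_val_sub_of_pow_eq_one hσ, ← mul_assoc,
        pow_mul_eq_mul_inv_pow hτ hστ]
    · simp only [sr_mul_r, pow_val_add_of_pow_eq_one hσ, mul_assoc]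
    · simp only [sr_mul_sr, pow_val_sub_of_pow_eq_one hσ]
      rw [mul_assoc, ← mul_assoc _ τ, pow_mul_eq_mul_inv_pow hτ hστ, ← mul_assoc, ← mul_assoc,
        hττ, one_mul]

@[simp]
theorem lift_r (hσ : σ ^ n = 1) (hτ : τ ^ 2 = 1) (hστ : (σ * τ) ^ 2 = 1) (i : ZMod n) :
    lift hσ hτ hστ (r i) = σ ^ i.val :=
  rfl

@[simp]
theorem lift_sr (hσ : σ ^ n = 1) (hτ : τ ^ 2 = 1) (hστ : (σ * τ) ^ 2 = 1) (i : ZMod n) :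
    lift hσ hτ hστ (sr i) = τ * σ ^ i.val :=
  rfl

theorem lift_surjective (hσ : σ ^ n = 1) (hτ : τ ^ 2 = 1) (hστ : (σ * τ) ^ 2 = 1)
    (hG : ∀ g : G, ∃ k : ℕ, g = σ ^ k ∨ g = τ * σ ^ k) :
    Function.Surjective (lift hσ hτ hστ) := by
  intro g
  obtain ⟨k, rfl | rfl⟩ := hG g
  · exact ⟨r k, by rw [lift_r, ZMod.val_natCast, ← pow_eq_pow_mod _ hσ]⟩
  · exact ⟨sr k, by rw [lift_sr, ZMod.val_natCast, ← pow_eq_pow_mod _ hσ]⟩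

theorem lift_bijective (hσ : σ ^ n = 1) (hτ : τ ^ 2 = 1) (hστ : (σ * τ) ^ 2 = 1)
    (hG : ∀ g : G, ∃ k : ℕ, g = σ ^ k ∨ g = τ * σ ^ k) (hcard : Nat.card G = 2 * n) :
    Function.Bijective (lift hσ hτ hστ) :=
  (lift_surjective hσ hτ hστ hG).bijective_of_nat_card_le (by rw [nat_card, hcard])

end DihedralGroup

theorem IsPrimitiveRoot.exists_pow_mul_eq_of_pow_eq_pow {R : Type*} [CommRing R] [IsDomain R]
    {n : ℕ} {ζ y z : R} (hζ : IsPrimitiveRoot ζ n) (hn : 0 < n) (h : y ^ n = z ^ n) :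
    ∃ i < n, ζ ^ i * z = y := by
  have hy : y ∈ nthRoots n (z ^ n) := (mem_nthRoots hn).2 h
  simpa [hζ.nthRoots_eq rfl] using hy

theorem AlgEquiv.pow_apply_of_apply_eq_mul {K L : Type*} [CommSemiring K] [Semiring L]
    [Algebra K L] {σ : L ≃ₐ[K] L} {x : L} {ζ : K} (h : σ x = algebraMap K L ζ * x) (k : ℕ) :
    (σ ^ k) x = algebraMap K L (ζ ^ k) * x := by
  induction k with
  | zero => simp
  | succ k ih =>
    rw [pow_succ', mul_apply, ih, map_mul, commutes, h, ← mul_assoc, ← map_mul, ← pow_succ]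

namespace AdjoinRoot

theorem algEquiv_ext {R S : Type*} [CommRing R] [CommRing S] [Algebra R S] {f : R[X]}
    {ψ χ : AdjoinRoot f ≃ₐ[R] S} (h : ψ (root f) = χ (root f)) : ψ = χ :=
  AlgEquiv.coe_toAlgHom_injective (algHom_ext h)

variable {K : Type*} [Field K] {f : K[X]} [Fact (Irreducible f)]

theorem exists_algEquiv_apply_root_eq {y : AdjoinRoot f} (hy : aeval y f = 0) :
    ∃ ψ : AdjoinRoot f ≃ₐ[K] AdjoinRoot f, ψ (root f) = y := by
  have := (powerBasis (Fact.out : Irreducible f).ne_zero).finite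
  exact ⟨.ofBijective _ (liftAlgHom f (Algebra.ofId K _) y hy).bijective,
    liftAlgHom_root f _ y hy⟩

theorem isSplittingField_of_splits (h : (f.map (algebraMap K (AdjoinRoot f))).Splits) :
    IsSplittingField K (AdjoinRoot f) f where
  splits' := h
  adjoin_rootSet' := by
    rw [eq_top_iff, ← adjoinRoot_eq_top]
    exact Algebra.adjoin_mono <| Set.singleton_subset_iff.2 <|
      (mem_rootSet).2 ⟨(Fact.out : Irreducible f).ne_zero, by rw [aeval_eq, mk_self]⟩

end AdjoinRoot

-- An `abbrev`, so that `Fact (Irreducible _)` instances for the unfolded polynomial apply to it.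
noncomputable abbrev dihedralPoly {R : Type*} [CommRing R] (n : ℕ) (a F : R) : R[X] :=
  X ^ (2 * n) - C (2 * a) * X ^ n + C (F ^ n)

section CommRing

variable {R : Type*} [CommRing R] {n : ℕ} {a F : R}

theorem map_dihedralPoly {S : Type*} [CommRing S] (f : R →+* S) :
    (dihedralPoly n a F).map f = dihedralPoly n (f a) (f F) := by
  simp [dihedralPoly, map_ofNat]

theorem aeval_dihedralPoly {S : Type*} [CommRing S] [Algebra R S] (y : S) :
    aeval y (dihedralPoly n a F) =
      eval y (dihedralPoly n (algebraMap R S a) (algebraMap R S F)) := by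
  rw [aeval_def, eval₂_eq_eval_map, map_dihedralPoly]

theorem isRoot_dihedralPoly_root :
    (dihedralPoly n (algebraMap R (AdjoinRoot (dihedralPoly n a F)) a)
      (algebraMap R _ F)).IsRoot (AdjoinRoot.root (dihedralPoly n a F)) := by
  rw [IsRoot, ← aeval_dihedralPoly, AdjoinRoot.aeval_eq, AdjoinRoot.mk_self]

@[simp]
theorem eval_dihedralPoly (x : R) :
    (dihedralPoly n a F).eval x = x ^ (2 * n) - 2 * a * x ^ n + F ^ n := by
  simp [dihedralPoly]

theorem natDegree_dihedralPoly [Nontrivial R] (hn : 0 < n) :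
    (dihedralPoly n a F).natDegree = 2 * n := by
  unfold dihedralPoly
  compute_degree!
  · simp [hn.ne', show 2 * n ≠ n by omega]
  all_goals omega

end CommRing

section Field

variable {L : Type*} [Field L] {n : ℕ} {a F x y ζ : L}

theorem dihedralPoly_eq_mul_of_isRoot (hx : (dihedralPoly n a F).IsRoot x) (hx0 : x ≠ 0) :
    dihedralPoly n a F = (X ^ n - C (x ^ n)) * (X ^ n - C ((F / x) ^ n)) := by
  have hprod : x ^ n * (F / x) ^ n = F ^ n := by rw [← mul_pow, mul_div_cancel₀ _ hx0]
  have hsum : x ^ n + (F / x) ^ n = 2 * a := by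
    rw [IsRoot, eval_dihedralPoly, pow_mul'] at hx
    rw [div_pow]
    field_simp
    linear_combination hx
  calc dihedralPoly n a F
      = X ^ (2 * n) - C (x ^ n + (F / x) ^ n) * X ^ n + C (x ^ n * (F / x) ^ n) := by
        rw [hsum, hprod]
    _ = (X ^ n - C (x ^ n)) * (X ^ n - C ((F / x) ^ n)) := by
        rw [map_add, map_mul]
        ring

theorem isRoot_dihedralPoly_iff (hx : (dihedralPoly n a F).IsRoot x) (hx0 : x ≠ 0) :
    (dihedralPoly n a F).IsRoot y ↔ y ^ n = x ^ n ∨ y ^ n = (F / x) ^ n := by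
  rw [dihedralPoly_eq_mul_of_isRoot hx hx0]
  simp [sub_eq_zero]

theorem splits_dihedralPoly (hx : (dihedralPoly n a F).IsRoot x) (hx0 : x ≠ 0)
    (hζ : IsPrimitiveRoot ζ n) : (dihedralPoly n a F).Splits := by
  rw [dihedralPoly_eq_mul_of_isRoot hx hx0]
  exact (X_pow_sub_C_splits_of_isPrimitiveRoot hζ rfl).mul
    (X_pow_sub_C_splits_of_isPrimitiveRoot hζ rfl)

theorem ne_zero_of_irreducible_dihedralPoly (hn : 0 < n) (h : Irreducible (dihedralPoly n a F)) :
    F ≠ 0 := by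
  rintro rfl
  have hdeg := degree_eq_one_of_irreducible_of_root h (x := 0) (by simp [hn.ne'])
  rw [degree_eq_natDegree h.ne_zero, natDegree_dihedralPoly hn] at hdeg
  norm_cast at hdeg
  omega

end Field

namespace dihedralPoly

open AdjoinRoot

variable {K : Type*} [Field K] {n : ℕ} {a F ζ : K} [Fact (Irreducible (dihedralPoly n a F))]

local notation "L" => AdjoinRoot (dihedralPoly n a F)

local notation "θ" => (root (dihedralPoly n a F) : L)

theorem root_ne_zero (hn : 0 < n) : θ ≠ 0 := by
  intro h
  have h0 := isRoot_dihedralPoly_root (n := n) (a := a) (F := F)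
  rw [h] at h0
  exact ne_zero_of_irreducible_dihedralPoly (a := a) hn Fact.out
    (by simpa [hn.ne'] using h0)

theorem aeval_eq_zero_iff (hn : 0 < n) {y : L} :
    aeval y (dihedralPoly n a F) = 0 ↔ y ^ n = θ ^ n ∨ y ^ n = (algebraMap K L F / θ) ^ n := by
  rw [aeval_dihedralPoly, ← IsRoot]
  exact isRoot_dihedralPoly_iff isRoot_dihedralPoly_root (root_ne_zero hn)

theorem finrank_adjoinRoot (hn : 0 < n) : Module.finrank K L = 2 * n :=
  finrank_quotient_span_eq_natDegree.trans (natDegree_dihedralPoly hn)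

theorem isGalois_adjoinRoot [CharZero K] (hn : 0 < n) (hζ : IsPrimitiveRoot ζ n) :
    IsGalois K L := by
  have := isSplittingField_of_splits (f := dihedralPoly n a F) <| by
    rw [map_dihedralPoly]
    exact splits_dihedralPoly isRoot_dihedralPoly_root (root_ne_zero hn)
      (hζ.map_of_injective (algebraMap K L).injective)
  exact IsGalois.of_separable_splitting_field
    (Fact.out : Irreducible (dihedralPoly n a F)).separable

theorem card_algEquiv_adjoinRoot [CharZero K] (hn : 0 < n)
    (hζ : IsPrimitiveRoot ζ n) : Nat.card (L ≃ₐ[K] L) = 2 * n := by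
  have := (powerBasis (Fact.out : Irreducible (dihedralPoly n a F)).ne_zero).finite
  have := isGalois_adjoinRoot (a := a) (F := F) hn hζ
  rw [IsGalois.card_aut_eq_finrank, finrank_adjoinRoot hn]

theorem exists_rotation (hn : 0 < n) (hζ : ζ ^ n = 1) :
    ∃ σ : L ≃ₐ[K] L, σ θ = algebraMap K L ζ * θ :=
  exists_algEquiv_apply_root_eq <| (aeval_eq_zero_iff hn).2 <|
    .inl (by rw [mul_pow, ← map_pow, hζ, map_one, one_mul])

theorem exists_reflection (hn : 0 < n) : ∃ τ : L ≃ₐ[K] L, τ θ = algebraMap K L F / θ :=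
  exists_algEquiv_apply_root_eq <| (aeval_eq_zero_iff hn).2 <| .inr rfl

theorem rotation_pow_eq_one {σ : L ≃ₐ[K] L} (hζ : ζ ^ n = 1)
    (hσ : σ θ = algebraMap K L ζ * θ) : σ ^ n = 1 :=
  algEquiv_ext <| by
    rw [σ.pow_apply_of_apply_eq_mul hσ, hζ, map_one, one_mul, AlgEquiv.one_apply]

theorem reflection_sq_eq_one {τ : L ≃ₐ[K] L} (hn : 0 < n) (hτ : τ θ = algebraMap K L F / θ) :
    τ ^ 2 = 1 := by
  have hF : algebraMap K L F ≠ 0 :=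
    (_root_.map_ne_zero _).2 (ne_zero_of_irreducible_dihedralPoly (a := a) hn Fact.out)
  refine algEquiv_ext ?_
  rw [sq, AlgEquiv.mul_apply, hτ, map_div₀, AlgEquiv.commutes, hτ, div_div_cancel₀ hF,
    AlgEquiv.one_apply]

theorem rotation_mul_reflection_sq_eq_one {σ τ : L ≃ₐ[K] L} (hn : 0 < n)
    (hζ : IsPrimitiveRoot ζ n) (hσ : σ θ = algebraMap K L ζ * θ)
    (hτ : τ θ = algebraMap K L F / θ) : (σ * τ) ^ 2 = 1 := by
  have hF : algebraMap K L F ≠ 0 :=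
    (_root_.map_ne_zero _).2 (ne_zero_of_irreducible_dihedralPoly (a := a) hn Fact.out)
  have hζ0 : algebraMap K L ζ ≠ 0 := (_root_.map_ne_zero _).2 (hζ.ne_zero hn.ne')
  have hx0 := root_ne_zero (a := a) (F := F) hn
  have hστ : (σ * τ) θ = algebraMap K L F / (algebraMap K L ζ * θ) := by
    rw [AlgEquiv.mul_apply, hτ, map_div₀, AlgEquiv.commutes, hσ]
  refine algEquiv_ext ?_
  rw [sq, AlgEquiv.mul_apply, hστ, map_div₀, map_mul, AlgEquiv.commutes, AlgEquiv.commutes, hστ,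
    AlgEquiv.one_apply]
  field_simp

theorem eq_rotation_pow_or_eq_reflection_mul_rotation_pow {σ τ : L ≃ₐ[K] L} (hn : 0 < n)
    (hζ : IsPrimitiveRoot ζ n) (hσ : σ θ = algebraMap K L ζ * θ)
    (hτ : τ θ = algebraMap K L F / θ) (ψ : L ≃ₐ[K] L) :
    ∃ k : ℕ, ψ = σ ^ k ∨ ψ = τ * σ ^ k := by
  have hψ : aeval (ψ θ) (dihedralPoly n a F) = 0 := by
    rw [aeval_algEquiv, AlgHom.comp_apply, aeval_eq, mk_self, map_zero]
  have hζ' := hζ.map_of_injective (algebraMap K L).injective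
  rcases (aeval_eq_zero_iff hn).1 hψ with h | h
  · obtain ⟨k, -, hk⟩ := hζ'.exists_pow_mul_eq_of_pow_eq_pow hn h
    refine ⟨k, .inl (algEquiv_ext ?_)⟩
    rw [σ.pow_apply_of_apply_eq_mul hσ, map_pow, hk]
  · obtain ⟨k, -, hk⟩ := hζ'.exists_pow_mul_eq_of_pow_eq_pow hn h
    refine ⟨k, .inr (algEquiv_ext ?_)⟩
    rw [AlgEquiv.mul_apply, σ.pow_apply_of_apply_eq_mul hσ, map_mul, AlgEquiv.commutes, hτ,
      map_pow, hk]

end dihedralPoly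

set_option maxHeartbeats 1000000 in
theorem dihedral_field_extension_of_irreducible
    (n : ℕ) (hn : 0 < n)
    (K : Type) [Field K] [CharZero K]
    (ζ a F : K) (hζ : IsPrimitiveRoot ζ n)
    [hirr : Fact (Irreducible (X ^ (2 * n) - C (2 * a) * X ^ n + C (F ^ n) : K[X]))] :
    IsField (AdjoinRoot (X ^ (2 * n) - C (2 * a) * X ^ n + C (F ^ n) : K[X])) ∧
    IsGalois K (AdjoinRoot (X ^ (2 * n) - C (2 * a) * X ^ n + C (F ^ n) : K[X])) ∧
    Module.finrank K (AdjoinRoot (X ^ (2 * n) - C (2 * a) * X ^ n + C (F ^ n) : K[X])) = 2 * n ∧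
    Nonempty ((AdjoinRoot (X ^ (2 * n) - C (2 * a) * X ^ n + C (F ^ n) : K[X]) ≃ₐ[K]
        AdjoinRoot (X ^ (2 * n) - C (2 * a) * X ^ n + C (F ^ n) : K[X])) ≃* DihedralGroup n) ∧
    ∃ σ τ : AdjoinRoot (X ^ (2 * n) - C (2 * a) * X ^ n + C (F ^ n) : K[X]) ≃ₐ[K]
        AdjoinRoot (X ^ (2 * n) - C (2 * a) * X ^ n + C (F ^ n) : K[X]),
      Subgroup.closure ({σ, τ} : Set _) = ⊤ ∧
      σ (AdjoinRoot.root (X ^ (2 * n) - C (2 * a) * X ^ n + C (F ^ n) : K[X])) =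
        algebraMap K _ ζ * AdjoinRoot.root (X ^ (2 * n) - C (2 * a) * X ^ n + C (F ^ n) : K[X]) ∧
      AdjoinRoot.root (X ^ (2 * n) - C (2 * a) * X ^ n + C (F ^ n) : K[X]) *
          τ (AdjoinRoot.root (X ^ (2 * n) - C (2 * a) * X ^ n + C (F ^ n) : K[X])) =
        algebraMap K _ F ∧
      σ ^ n = 1 ∧ τ ^ 2 = 1 ∧ (σ * τ) ^ 2 = 1 := by
  have : NeZero n := ⟨hn.ne'⟩
  have hx0 := dihedralPoly.root_ne_zero (a := a) (F := F) hn
  obtain ⟨σ, hσ⟩ := dihedralPoly.exists_rotation (a := a) (F := F) hn hζ.pow_eq_one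
  obtain ⟨τ, hτ⟩ := dihedralPoly.exists_reflection (a := a) (F := F) hn
  have hσn := dihedralPoly.rotation_pow_eq_one hζ.pow_eq_one hσ
  have hτ2 := dihedralPoly.reflection_sq_eq_one hn hτ
  have hστ := dihedralPoly.rotation_mul_reflection_sq_eq_one hn hζ hσ hτ
  have hG := dihedralPoly.eq_rotation_pow_or_eq_reflection_mul_rotation_pow hn hζ hσ hτ
  have hφ := DihedralGroup.lift_bijective hσn hτ2 hστ hG
    (dihedralPoly.card_algEquiv_adjoinRoot hn hζ)
  exact ⟨Field.toIsField _, dihedralPoly.isGalois_adjoinRoot hn hζ,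
    dihedralPoly.finrank_adjoinRoot hn, ⟨(MulEquiv.ofBijective _ hφ).symm⟩, σ, τ,
    Subgroup.closure_pair_eq_top_of_forall_eq_pow_or_mul_pow hG, hσ,
    by rw [hτ, mul_div_cancel₀ _ hx0], hσn, hτ2, hστ⟩
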